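/- Let (S,𝓐,μ) be a measure space, let 2 ≤ p < ∞, and let X be a (2,D)-smooth Banach space. Then the Bochner space L^p(μ;X) is (2, D·√(p−1))-smooth; that is, for all f, g ∈ L^p(μ;X) one has ‖f+g‖_{L^p(μ;X)}² + ‖f−g‖_{L^p(μ;X)}² ≤ 2‖f‖_{L^p(μ;X)}² + 2D²(p−1)‖g‖_{L^p(μ;X)}². -/

import Mathlib

/-!
The scalar core is the two-point inequality `(1 + t)^p + (1 - t)^p ≤ 2 (1 + (p - 1) t²)^{p/2}`
on `[0, 1]`. Both sides agree to first order at `t = 0`, and differentiating twice in `t` shows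
that the second derivative of the gap is nonnegative as soon as the same inequality holds with
exponent `p - 2` (and any constant `c ≤ p - 1`). For `p ∈ [2, 4]` that input is the concavity of
`x ↦ x^{(p-2)/2}`, so induction in steps of `2` covers every `p ≥ 2`.

Scaling gives `a^p + b^p ≤ 2 (((a + b)/2)² + (p - 1) ((a - b)/2)²)^{p/2}`; with `a = ‖x + y‖`,
`b = ‖x - y‖`, smoothness of `X` (which at `x = 0` also gives `‖y‖ ≤ D ‖y‖`) turns the right side
into `2 (‖x‖² + D² (p - 1) ‖y‖²)^{p/2}`. Integrating this pointwise bound and applying Minkowski's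
inequality in `L^{p/2}` to `‖f‖² + D² (p - 1) ‖g‖²` yields
`‖f + g‖^p + ‖f - g‖^p ≤ 2 (‖f‖² + D² (p - 1) ‖g‖²)^{p/2}`, and the power-mean inequality
`((A² + B²)/2)^{p/2} ≤ (A^p + B^p)/2` finishes the proof.
-/

open Real Set

def TwoPointIneq (p c : ℝ) : Prop :=
  ∀ t ∈ Icc (0 : ℝ) 1, (1 + t) ^ p + (1 - t) ^ p ≤ 2 * (1 + c * t ^ 2) ^ (p / 2)

lemma TwoPointIneq.mono {p c c' : ℝ} (h : TwoPointIneq p c) (hp : 0 ≤ p) (hc : 0 ≤ c)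
    (hcc' : c ≤ c') : TwoPointIneq p c' := fun t ht ↦
  (h t ht).trans <| by gcongr

lemma twoPointIneq_one {q : ℝ} (hq₀ : 0 ≤ q) (hq₂ : q ≤ 2) : TwoPointIneq q 1 := by
  intro t ⟨ht₀, ht₁⟩
  have hsq : ∀ s : ℝ, 0 ≤ s → (s ^ 2) ^ (q / 2) = s ^ q := fun s hs ↦ by
    rw [← rpow_natCast, ← rpow_mul hs]; ring_nf
  have := (concaveOn_rpow (p := q / 2) (by positivity) (by linarith)).2
    (mem_Ici.2 (sq_nonneg (1 + t))) (mem_Ici.2 (sq_nonneg (1 - t)))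
    (by norm_num : (0 : ℝ) ≤ 1 / 2) (by norm_num : (0 : ℝ) ≤ 1 / 2) (by norm_num)
  simp only [smul_eq_mul, hsq _ (by linarith : 0 ≤ 1 + t), hsq _ (by linarith : 0 ≤ 1 - t)] at this
  calc (1 + t) ^ q + (1 - t) ^ q = 2 * (1 / 2 * (1 + t) ^ q + 1 / 2 * (1 - t) ^ q) := by ring
    _ ≤ 2 * (1 / 2 * (1 + t) ^ 2 + 1 / 2 * (1 - t) ^ 2) ^ (q / 2) := by gcongr
    _ = 2 * (1 + 1 * t ^ 2) ^ (q / 2) := by ring_nf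

lemma le_of_hasDerivAt_nonneg {f f' : ℝ → ℝ} {a b : ℝ}
    (hf : ∀ t ∈ Icc a b, HasDerivAt f (f' t) t) (hf' : ∀ t ∈ Ioo a b, 0 ≤ f' t) :
    ∀ t ∈ Icc a b, f a ≤ f t := fun t ht ↦
  monotoneOn_of_hasDerivWithinAt_nonneg (convex_Icc a b) (HasDerivAt.continuousOn hf)
    (fun t ht ↦ (hf t (interior_subset ht)).hasDerivWithinAt) (by rwa [interior_Icc])
    (left_mem_Icc.2 (ht.1.trans ht.2)) ht ht.1

lemma hasDerivAt_two_point_gap {p : ℝ} (hp : 1 ≤ p) (t : ℝ) :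
    HasDerivAt (fun t ↦ 2 * (1 + (p - 1) * t ^ 2) ^ (p / 2) - (1 + t) ^ p - (1 - t) ^ p)
      (p * (2 * (p - 1) * t * (1 + (p - 1) * t ^ 2) ^ ((p - 2) / 2)
        - (1 + t) ^ (p - 1) + (1 - t) ^ (p - 1))) t := by
  have hw : 1 + (p - 1) * t ^ 2 ≠ 0 := by positivity
  refine (((((((hasDerivAt_pow 2 t).const_mul (p - 1)).const_add 1).rpow_const (p := p / 2)
    (Or.inl hw)).const_mul 2).sub (((hasDerivAt_id t).const_add 1).rpow_const (Or.inr hp))).sub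
    (((hasDerivAt_id t).const_sub 1).rpow_const (Or.inr hp))).congr_deriv ?_
  rw [show p / 2 - 1 = (p - 2) / 2 by ring]
  simp only [id]
  ring

lemma hasDerivAt_two_point_gap_deriv {p : ℝ} (hp : 2 ≤ p) (t : ℝ) :
    HasDerivAt (fun t ↦ 2 * (p - 1) * t * (1 + (p - 1) * t ^ 2) ^ ((p - 2) / 2)
        - (1 + t) ^ (p - 1) + (1 - t) ^ (p - 1))
      ((p - 1) * (2 * (1 + (p - 1) * t ^ 2) ^ ((p - 4) / 2) * (1 + (p - 1) ^ 2 * t ^ 2)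
        - (1 + t) ^ (p - 2) - (1 - t) ^ (p - 2))) t := by
  have hw : 0 < 1 + (p - 1) * t ^ 2 := by nlinarith [sq_nonneg t]
  have hp1 : 1 ≤ p - 1 := by linarith
  refine (((((hasDerivAt_id t).const_mul (2 * (p - 1))).mul
    ((((hasDerivAt_pow 2 t).const_mul (p - 1)).const_add 1).rpow_const (p := (p - 2) / 2)
      (Or.inl hw.ne'))).sub (((hasDerivAt_id t).const_add 1).rpow_const (Or.inr hp1))).add
    (((hasDerivAt_id t).const_sub 1).rpow_const (Or.inr hp1))).congr_deriv ?_
  rw [show (p - 2) / 2 - 1 = (p - 4) / 2 by ring, show p - 1 - 1 = p - 2 by ring,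
    show (p - 2) / 2 = (p - 4) / 2 + 1 by ring, rpow_add_one hw.ne']
  simp only [id]
  ring

lemma TwoPointIneq.of_sub_two {p : ℝ} (hp : 2 ≤ p) (h : TwoPointIneq (p - 2) (p - 1)) :
    TwoPointIneq p (p - 1) := by
  have hderiv₂ : ∀ t ∈ Icc (0 : ℝ) 1, 0 ≤ (p - 1) * (2 * (1 + (p - 1) * t ^ 2) ^ ((p - 4) / 2)
      * (1 + (p - 1) ^ 2 * t ^ 2) - (1 + t) ^ (p - 2) - (1 - t) ^ (p - 2)) := by
    intro t ht
    have hw : 0 < 1 + (p - 1) * t ^ 2 := by nlinarith [sq_nonneg t]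
    have hsplit : (1 + (p - 1) * t ^ 2) ^ ((p - 2) / 2)
        = (1 + (p - 1) * t ^ 2) ^ ((p - 4) / 2) * (1 + (p - 1) * t ^ 2) := by
      rw [show (p - 2) / 2 = (p - 4) / 2 + 1 by ring, rpow_add_one hw.ne']
    have hle : (1 + (p - 1) * t ^ 2) ^ ((p - 2) / 2)
        ≤ (1 + (p - 1) * t ^ 2) ^ ((p - 4) / 2) * (1 + (p - 1) ^ 2 * t ^ 2) := by
      rw [hsplit]
      gcongr
      nlinarith [sq_nonneg t]
    have hprev := h t ht
    apply mul_nonneg (by linarith)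
    linarith
  have hderiv₁ : ∀ t ∈ Icc (0 : ℝ) 1,
      0 ≤ p * (2 * (p - 1) * t * (1 + (p - 1) * t ^ 2) ^ ((p - 2) / 2)
        - (1 + t) ^ (p - 1) + (1 - t) ^ (p - 1)) := by
    intro t ht
    refine mul_nonneg (by linarith) ((le_of_hasDerivAt_nonneg
      (fun t _ ↦ hasDerivAt_two_point_gap_deriv hp t)
      (fun t ht ↦ hderiv₂ t (Ioo_subset_Icc_self ht)) t ht).trans_eq' ?_)
    norm_num
  intro t ht
  rw [← sub_nonneg, ← sub_sub]
  refine (le_of_hasDerivAt_nonneg (fun t _ ↦ hasDerivAt_two_point_gap (by linarith) t)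
    (fun t ht ↦ hderiv₁ t (Ioo_subset_Icc_self ht)) t ht).trans_eq' ?_
  norm_num

lemma twoPointIneq {p : ℝ} (hp : 2 ≤ p) : TwoPointIneq p (p - 1) := by
  obtain ⟨n, hn⟩ := exists_nat_ge (p / 2)
  induction n generalizing p with
  | zero => simp only [CharP.cast_eq_zero] at hn; linarith
  | succ n ih =>
    refine TwoPointIneq.of_sub_two hp ?_
    rcases le_or_gt p 4 with hp4 | hp4
    · exact (twoPointIneq_one (by linarith) (by linarith)).mono (by linarith) zero_le_one
        (by linarith)
    · exact (ih (p := p - 2) (by linarith) (by push_cast at hn; linarith)).mono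
        (by linarith) (by linarith) (by linarith)

lemma rpow_add_rpow_le_two_mul {p a b : ℝ} (hp : 2 ≤ p) (ha : 0 ≤ a) (hb : 0 ≤ b) :
    a ^ p + b ^ p ≤ 2 * (((a + b) / 2) ^ 2 + (p - 1) * ((a - b) / 2) ^ 2) ^ (p / 2) := by
  wlog hba : b ≤ a generalizing a b
  · rw [add_comm (a ^ p)]
    convert this hb ha (le_of_not_ge hba) using 4 <;> ring
  rcases (add_nonneg ha hb).eq_or_lt with hab | hab
  · obtain ⟨rfl, rfl⟩ : a = 0 ∧ b = 0 := ⟨by linarith, by linarith⟩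
    norm_num [zero_rpow (by linarith : p ≠ 0), zero_rpow (by linarith : p / 2 ≠ 0)]
  set m := (a + b) / 2
  set t := (a - b) / (a + b)
  have ht : t ∈ Icc (0 : ℝ) 1 :=
    ⟨div_nonneg (by linarith) hab.le, (div_le_one hab).2 (by linarith)⟩
  have hm : 0 ≤ m := by positivity
  have ha' : a = m * (1 + t) := by simp only [m, t]; field_simp; ring
  have hb' : b = m * (1 - t) := by simp only [m, t]; field_simp; ring
  have hab' : (a - b) / 2 = m * t := by simp only [m, t]; field_simp
  calc a ^ p + b ^ p = m ^ p * ((1 + t) ^ p + (1 - t) ^ p) := by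
        rw [ha', hb', mul_rpow hm (by linarith [ht.1]), mul_rpow hm (by linarith [ht.2])]; ring
    _ ≤ m ^ p * (2 * (1 + (p - 1) * t ^ 2) ^ (p / 2)) := by gcongr; exact twoPointIneq hp t ht
    _ = 2 * ((m ^ 2) ^ (p / 2) * (1 + (p - 1) * t ^ 2) ^ (p / 2)) := by
        rw [← rpow_natCast m 2, ← rpow_mul hm]; ring_nf
    _ = 2 * (m ^ 2 + (p - 1) * ((a - b) / 2) ^ 2) ^ (p / 2) := by
        rw [← mul_rpow (by positivity) (by nlinarith [sq_nonneg t]), hab']; ring_nf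

lemma norm_add_rpow_add_norm_sub_rpow_le {X : Type*} [SeminormedAddCommGroup X] {p D : ℝ}
    (hp : 2 ≤ p)
    (hsmooth : ∀ x y : X, ‖x + y‖ ^ 2 + ‖x - y‖ ^ 2 ≤ 2 * ‖x‖ ^ 2 + 2 * D ^ 2 * ‖y‖ ^ 2)
    (x y : X) :
    ‖x + y‖ ^ p + ‖x - y‖ ^ p ≤ 2 * (‖x‖ ^ 2 + D ^ 2 * (p - 1) * ‖y‖ ^ 2) ^ (p / 2) := by
  have hy : ‖y‖ ^ 2 ≤ D ^ 2 * ‖y‖ ^ 2 := by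
    have := hsmooth 0 y
    simp only [zero_add, zero_sub, norm_neg, norm_zero] at this
    linarith
  have hdiff : ((‖x + y‖ - ‖x - y‖) / 2) ^ 2 ≤ ‖y‖ ^ 2 := by
    have h := abs_norm_sub_norm_le (x + y) (x - y)
    rw [add_sub_sub_cancel] at h
    replace h := h.trans (norm_add_le y y)
    rw [div_pow, ← sq_abs]
    nlinarith [abs_nonneg (‖x + y‖ - ‖x - y‖)]
  have hbase : 0 ≤ ((‖x + y‖ + ‖x - y‖) / 2) ^ 2 + (p - 1) * ((‖x + y‖ - ‖x - y‖) / 2) ^ 2 := by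
    have : 0 ≤ p - 1 := by linarith
    positivity
  refine (rpow_add_rpow_le_two_mul hp (norm_nonneg _) (norm_nonneg _)).trans ?_
  gcongr 2 * ?_ ^ _
  have hp2 : 0 ≤ p - 2 := by linarith
  nlinarith [hsmooth x y, mul_le_mul_of_nonneg_left hdiff hp2, mul_le_mul_of_nonneg_left hy hp2]

open MeasureTheory
open scoped ENNReal

lemma ENNReal.sq_add_sq_le_two_mul_of_rpow_add_rpow_le {p : ℝ} {a b c : ℝ≥0∞} (hp : 2 ≤ p)
    (h : a ^ p + b ^ p ≤ 2 * c ^ (p / 2)) : a ^ 2 + b ^ 2 ≤ 2 * c := by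
  have hsq : ∀ x : ℝ≥0∞, (x ^ (2 : ℕ)) ^ (p / 2) = x ^ p := fun x ↦ by
    rw [← ENNReal.rpow_natCast, ← ENNReal.rpow_mul]; ring_nf
  have hmean : 2⁻¹ * a ^ 2 + 2⁻¹ * b ^ 2 ≤ c := by
    rw [← ENNReal.rpow_le_rpow_iff (by positivity : 0 < p / 2)]
    calc (2⁻¹ * a ^ 2 + 2⁻¹ * b ^ 2) ^ (p / 2) ≤ 2⁻¹ * a ^ p + 2⁻¹ * b ^ p := by
          have := ENNReal.rpow_arith_mean_le_arith_mean2_rpow _ _ (a ^ 2) (b ^ 2)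
            ENNReal.inv_two_add_inv_two (by linarith : 1 ≤ p / 2)
          rwa [hsq, hsq] at this
      _ ≤ 2⁻¹ * (2 * c ^ (p / 2)) := by rw [← mul_add]; gcongr
      _ = c ^ (p / 2) := ENNReal.inv_mul_cancel_left two_ne_zero ENNReal.ofNat_ne_top
  calc a ^ 2 + b ^ 2 = 2 * (2⁻¹ * a ^ 2 + 2⁻¹ * b ^ 2) := by
        rw [← mul_add, ← mul_assoc, ENNReal.mul_inv_cancel two_ne_zero ENNReal.ofNat_ne_top,
          one_mul]
    _ ≤ 2 * c := by gcongr

section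
variable {S : Type*} [MeasurableSpace S] {μ : Measure S}

lemma eLpNorm_ofReal_rpow {E : Type*} [NormedAddCommGroup E] {p : ℝ} (hp : 0 < p) (f : S → E) :
    eLpNorm f (ENNReal.ofReal p) μ ^ p = ∫⁻ a, ‖f a‖ₑ ^ p ∂μ := by
  rw [eLpNorm_eq_lintegral_rpow_enorm_toReal (by simpa using hp) ENNReal.ofReal_ne_top,
    ENNReal.toReal_ofReal hp.le, ← ENNReal.rpow_mul, one_div_mul_cancel hp.ne', ENNReal.rpow_one]

lemma eLpNorm_rpow_add_eLpNorm_rpow_le {E F H : Type*} [NormedAddCommGroup E]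
    [NormedAddCommGroup F] [NormedAddCommGroup H] {p q : ℝ} (hp : 0 < p) (hq : 0 < q)
    {u : S → E} {v : S → F} {h : S → H} (hu : AEStronglyMeasurable u μ)
    (hpt : ∀ᵐ a ∂μ, ‖u a‖ ^ p + ‖v a‖ ^ p ≤ 2 * ‖h a‖ ^ q) :
    eLpNorm u (ENNReal.ofReal p) μ ^ p + eLpNorm v (ENNReal.ofReal p) μ ^ p
      ≤ 2 * eLpNorm h (ENNReal.ofReal q) μ ^ q := by
  rw [eLpNorm_ofReal_rpow hp, eLpNorm_ofReal_rpow hp, eLpNorm_ofReal_rpow hq,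
    ← lintegral_add_left' (hu.enorm.pow_const p), ← lintegral_const_mul' _ _ ENNReal.ofNat_ne_top]
  refine lintegral_mono_ae (hpt.mono fun a ha ↦ ?_)
  simp only [← ofReal_norm, ENNReal.ofReal_rpow_of_nonneg (norm_nonneg _) hp.le,
    ENNReal.ofReal_rpow_of_nonneg (norm_nonneg _) hq.le]
  rw [← ENNReal.ofReal_add (by positivity) (by positivity), ← ENNReal.ofReal_ofNat 2,
    ← ENNReal.ofReal_mul zero_le_two]
  exact ENNReal.ofReal_le_ofReal ha

lemma eLpNorm_norm_sq {E : Type*} [NormedAddCommGroup E] (f : S → E) (r : ℝ≥0∞) :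
    eLpNorm (fun a ↦ ‖f a‖ ^ 2) r μ = eLpNorm f (r * 2) μ ^ 2 := by
  simpa only [Real.rpow_two, ENNReal.ofReal_ofNat, ENNReal.rpow_two] using
    eLpNorm_norm_rpow (p := r) (μ := μ) f two_pos

lemma eLpNorm_norm_sq_add_le {E F : Type*} [NormedAddCommGroup E] [NormedAddCommGroup F]
    {r : ℝ≥0∞} (hr : 1 ≤ r) {f : S → E} {g : S → F} (hf : AEStronglyMeasurable f μ)
    (hg : AEStronglyMeasurable g μ) (K : ℝ) :
    eLpNorm (fun a ↦ ‖f a‖ ^ 2 + K * ‖g a‖ ^ 2) r μ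
      ≤ eLpNorm f (r * 2) μ ^ 2 + ‖K‖ₑ * eLpNorm g (r * 2) μ ^ 2 := by
  calc _ ≤ eLpNorm (fun a ↦ ‖f a‖ ^ 2) r μ + eLpNorm (K • fun a ↦ ‖g a‖ ^ 2) r μ :=
        eLpNorm_add_le (hf.norm.pow 2) ((hg.norm.pow 2).const_smul K) hr
    _ = _ := by rw [eLpNorm_const_smul, eLpNorm_norm_sq, eLpNorm_norm_sq]

theorem eLpNorm_add_sq_add_eLpNorm_sub_sq_le {X : Type*} [NormedAddCommGroup X] {p D : ℝ}
    (hp : 2 ≤ p)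
    (hsmooth : ∀ x y : X, ‖x + y‖ ^ 2 + ‖x - y‖ ^ 2 ≤ 2 * ‖x‖ ^ 2 + 2 * D ^ 2 * ‖y‖ ^ 2)
    {f g : S → X} (hf : AEStronglyMeasurable f μ) (hg : AEStronglyMeasurable g μ) :
    eLpNorm (f + g) (ENNReal.ofReal p) μ ^ 2 + eLpNorm (f - g) (ENNReal.ofReal p) μ ^ 2
      ≤ 2 * (eLpNorm f (ENNReal.ofReal p) μ ^ 2
        + ENNReal.ofReal (D ^ 2 * (p - 1)) * eLpNorm g (ENNReal.ofReal p) μ ^ 2) := by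
  have hK : 0 ≤ D ^ 2 * (p - 1) := mul_nonneg (sq_nonneg D) (by linarith)
  have hr : ENNReal.ofReal (p / 2) * 2 = ENNReal.ofReal p := by
    rw [← ENNReal.ofReal_ofNat 2, ← ENNReal.ofReal_mul (by linarith)]; ring_nf
  refine ENNReal.sq_add_sq_le_two_mul_of_rpow_add_rpow_le hp ?_
  calc _ ≤ 2 * eLpNorm (fun a ↦ ‖f a‖ ^ 2 + D ^ 2 * (p - 1) * ‖g a‖ ^ 2)
        (ENNReal.ofReal (p / 2)) μ ^ (p / 2) := by
        refine eLpNorm_rpow_add_eLpNorm_rpow_le (by linarith) (by linarith) (hf.add hg)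
          (ae_of_all _ fun a ↦ ?_)
        rw [Real.norm_of_nonneg (by positivity)]
        exact norm_add_rpow_add_norm_sub_rpow_le hp hsmooth (f a) (g a)
    _ ≤ _ := by
        gcongr
        have h := eLpNorm_norm_sq_add_le (r := ENNReal.ofReal (p / 2))
          (ENNReal.one_le_ofReal.2 (by linarith)) hf hg (D ^ 2 * (p - 1))
        rwa [hr, Real.enorm_of_nonneg hK] at h

end

theorem bochner_Lp_two_smooth_general
    {S : Type*} [MeasurableSpace S] (μ : Measure S)
    {X : Type*} [NormedAddCommGroup X]
    (p D : ℝ) (hp : 2 ≤ p)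
    (hsmooth : ∀ x y : X,
      ‖x + y‖ ^ 2 + ‖x - y‖ ^ 2 ≤ 2 * ‖x‖ ^ 2 + 2 * D ^ 2 * ‖y‖ ^ 2)
    (f g : Lp X (ENNReal.ofReal p) μ) :
    ‖f + g‖ ^ 2 + ‖f - g‖ ^ 2 ≤ 2 * ‖f‖ ^ 2 + 2 * D ^ 2 * (p - 1) * ‖g‖ ^ 2 := by
  have key := eLpNorm_add_sq_add_eLpNorm_sub_sq_le hp hsmooth
    (Lp.aestronglyMeasurable f) (Lp.aestronglyMeasurable g)
  rw [← eLpNorm_congr_ae (Lp.coeFn_add f g), ← eLpNorm_congr_ae (Lp.coeFn_sub f g)] at key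
  have hf := Lp.eLpNorm_ne_top f
  have hg := Lp.eLpNorm_ne_top g
  have hK : 0 ≤ D ^ 2 * (p - 1) := mul_nonneg (sq_nonneg D) (by linarith)
  have := ENNReal.toReal_mono (by finiteness) key
  rw [ENNReal.toReal_add (by finiteness) (by finiteness), ENNReal.toReal_mul,
    ENNReal.toReal_add (by finiteness) (by finiteness), ENNReal.toReal_mul,
    ENNReal.toReal_ofReal hK] at this
  simp only [ENNReal.toReal_pow, ← Lp.norm_def, ENNReal.toReal_ofNat] at this
  linarith

/-- **`L^p(μ;X)` is `(2, D√(p−1))`-smooth when `X` is `(2,D)`-smooth and `2 ≤ p < ∞`.**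
For all `f, g` in the Bochner space `L^p(μ;X)` one has
`‖f+g‖² + ‖f−g‖² ≤ 2‖f‖² + 2D²(p−1)‖g‖²`. -/
theorem bochner_Lp_two_smooth
    {S : Type*} [MeasurableSpace S] (μ : Measure S)
    {X : Type*} [NormedAddCommGroup X] [NormedSpace ℝ X] [CompleteSpace X]
    (p D : ℝ) (hp : 2 ≤ p) (hD : 0 ≤ D)
    (hsmooth : ∀ x y : X,
      ‖x + y‖ ^ 2 + ‖x - y‖ ^ 2 ≤ 2 * ‖x‖ ^ 2 + 2 * D ^ 2 * ‖y‖ ^ 2)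
    (f g : Lp X (ENNReal.ofReal p) μ) :
    ‖f + g‖ ^ 2 + ‖f - g‖ ^ 2 ≤ 2 * ‖f‖ ^ 2 + 2 * D ^ 2 * (p - 1) * ‖g‖ ^ 2 :=
  bochner_Lp_two_smooth_general μ p D hp hsmooth f g
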